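/- If a measurable set Ω ⊆ ℝ tiles ℝ by {0, 1, …, p−1}, and Ω₀ := Ω ∩ [0, p), then the translates {Ω₀ + pk : k ∈ ℤ} are pairwise disjoint and their union equals Ω up to measure zero; that is, Ω₀ tiles Ω by pℤ. -/

import Mathlib

open MeasureTheory Set
noncomputable section

/-- Translate of a set of reals by `t`. -/
def tr (t : ℝ) (A : Set ℝ) : Set ℝ := (fun x => x + t) '' A

/-- `Ω` tiles `ℝ` by translations by `{0, 1, …, p-1}`. -/
def TilesByFin (Ω : Set ℝ) (p : ℕ) : Prop :=
  (∀ j j' : ℕ, j < p → j' < p → j ≠ j' →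
      volume (tr (j : ℝ) Ω ∩ tr (j' : ℝ) Ω) = 0) ∧
  volume ((⋃ j ∈ Finset.range p, tr (j : ℝ) Ω)ᶜ) = 0

lemma mem_tr {t x : ℝ} {A : Set ℝ} : x ∈ tr t A ↔ x - t ∈ A := by
  constructor
  · rintro ⟨a, ha, rfl⟩; simpa using ha
  · intro h; exact ⟨x - t, h, by ring⟩

lemma null_translate {A : Set ℝ} (h : volume A = 0) (c : ℝ) :
    volume {x : ℝ | x - c ∈ A} = 0 := by
  have : {x : ℝ | x - c ∈ A} = (fun x => x + (-c)) ⁻¹' A := by ext x; simp [sub_eq_add_neg]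
  rw [this, measure_preimage_add_right, h]

theorem stmt1 (p : ℕ) (hp : 2 ≤ p) (Ω : Set ℝ) (hΩ : MeasurableSet Ω)
    (htile : TilesByFin Ω p) (Ω₀ : Set ℝ) (hΩ₀ : Ω₀ = Ω ∩ Ico 0 (p : ℝ)) :
    (∀ k l : ℤ, k ≠ l →
        Disjoint (tr ((p : ℝ) * k) Ω₀) (tr ((p : ℝ) * l) Ω₀)) ∧
    volume ((Ω \ ⋃ k : ℤ, tr ((p : ℝ) * k) Ω₀) ∪
        ((⋃ k : ℤ, tr ((p : ℝ) * k) Ω₀) \ Ω)) = 0 := by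
  obtain ⟨hdisj, hcover⟩ := htile
  have hp0 : (0:ℝ) < p := by positivity
  -- subset of an interval
  have hΩ₀sub : ∀ (t x : ℝ), x ∈ tr t Ω₀ → t ≤ x ∧ x < t + p := by
    intro t x hx
    rw [mem_tr, hΩ₀] at hx
    obtain ⟨-, h0, h1⟩ := hx
    constructor <;> linarith
  constructor
  · -- disjointness
    intro k l hkl
    rw [Set.disjoint_left]
    intro x hxk hxl
    obtain ⟨hk1, hk2⟩ := hΩ₀sub _ _ hxk
    obtain ⟨hl1, hl2⟩ := hΩ₀sub _ _ hxl
    rcases lt_or_gt_of_ne hkl with h | h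
    · have : (k:ℝ) + 1 ≤ l := by exact_mod_cast h
      nlinarith
    · have : (l:ℝ) + 1 ≤ k := by exact_mod_cast h
      nlinarith
  -- the bad set
  set Bad : Set ℝ := (⋃ j ∈ Finset.range p, tr (j : ℝ) Ω)ᶜ ∪
      ⋃ (j : ℕ) (j' : ℕ) (_ : j < p) (_ : j' < p) (_ : j ≠ j'),
        tr (j : ℝ) Ω ∩ tr (j' : ℝ) Ω with hBadDef
  have hBad : volume Bad = 0 := by
    apply measure_union_null hcover
    apply measure_iUnion_null; intro j
    apply measure_iUnion_null; intro j'
    apply measure_iUnion_null; intro hj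
    apply measure_iUnion_null; intro hj'
    apply measure_iUnion_null; intro hjj'
    exact hdisj j j' hj hj' hjj'
  have hP : ∀ x : ℝ, x ∉ Bad →
      (∃ j : ℕ, j < p ∧ x - j ∈ Ω) ∧
      (∀ j j' : ℕ, j < p → j' < p → x - j ∈ Ω → x - j' ∈ Ω → j = j') := by
    intro x hx
    rw [hBadDef, Set.mem_union, not_or, Set.mem_compl_iff, not_not] at hx
    obtain ⟨hex, huniq⟩ := hx
    constructor
    · simp only [Set.mem_iUnion, Finset.mem_range] at hex
      obtain ⟨j, hj, hxj⟩ := hex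
      exact ⟨j, hj, mem_tr.mp hxj⟩
    · intro j j' hj hj' hxj hxj'
      by_contra hne
      apply huniq
      simp only [Set.mem_iUnion]
      exact ⟨j, j', hj, hj', hne, mem_tr.mpr hxj, mem_tr.mpr hxj'⟩
  -- one-step periodicity a.e.
  have hS1 : {x : ℝ | ¬ (x ∈ Ω ↔ x - p ∈ Ω)} ⊆ Bad ∪ {x : ℝ | x - 1 ∈ Bad} := by
    intro x hx
    by_contra hxB
    rw [Set.mem_union, not_or] at hxB
    obtain ⟨hxB1, hxB2⟩ := hxB
    obtain ⟨hex, huniq⟩ := hP x hxB1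
    obtain ⟨hex', huniq'⟩ := hP (x - 1) hxB2
    apply hx
    constructor
    · intro hxΩ
      obtain ⟨j', hj', hxj'⟩ := hex'
      by_cases hje : j' = p - 1
      · have : x - 1 - (j' : ℝ) = x - p := by
          rw [hje]
          have : ((p - 1 : ℕ) : ℝ) = (p : ℝ) - 1 := by
            have : 1 ≤ p := by omega
            push_cast [this]; ring
          rw [this]; ring
        rwa [this] at hxj'
      · exfalso
        have hj1 : j' + 1 < p := by omega
        have : x - ((j' + 1 : ℕ) : ℝ) ∈ Ω := by
          have : x - ((j' + 1 : ℕ) : ℝ) = x - 1 - j' := by push_cast; ring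
          rw [this]; exact hxj'
        have h0 : x - ((0 : ℕ) : ℝ) ∈ Ω := by simpa using hxΩ
        have := huniq 0 (j' + 1) (by omega) hj1 h0 this
        omega
    · intro hxp
      by_contra hxΩ
      obtain ⟨j, hj, hxj⟩ := hex
      have hj0 : j ≠ 0 := by
        intro h; rw [h] at hxj; simp at hxj; exact hxΩ hxj
      have h1 : x - 1 - ((j - 1 : ℕ) : ℝ) ∈ Ω := by
        have : x - 1 - ((j - 1 : ℕ) : ℝ) = x - j := by
          have : 1 ≤ j := by omega
          push_cast [this]; ring
        rw [this]; exact hxj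
      have h2 : x - 1 - ((p - 1 : ℕ) : ℝ) ∈ Ω := by
        have : x - 1 - ((p - 1 : ℕ) : ℝ) = x - p := by
          have : 1 ≤ p := by omega
          push_cast [this]; ring
        rw [this]; exact hxp
      have := huniq' (j - 1) (p - 1) (by omega) (by omega) h1 h2
      omega
  have hS1null : volume {x : ℝ | ¬ (x ∈ Ω ↔ x - p ∈ Ω)} = 0 :=
    measure_mono_null hS1 (measure_union_null hBad (null_translate hBad 1))
  -- k-step periodicity a.e.
  have hSk : ∀ k : ℤ, volume {x : ℝ | ¬ (x ∈ Ω ↔ x - p * k ∈ Ω)} = 0 := by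
    intro k
    apply measure_mono_null (t := ⋃ m : ℤ, {x : ℝ | x - p * m ∈ {y : ℝ | ¬ (y ∈ Ω ↔ y - p ∈ Ω)}})
    · intro x hx
      by_contra hxU
      simp only [Set.mem_iUnion, Set.mem_setOf_eq, not_exists, not_not] at hxU
      apply hx
      have key : ∀ n : ℤ, (x ∈ Ω ↔ x - p * n ∈ Ω) := by
        intro n
        induction n using Int.induction_on with
        | zero => simp
        | succ n ih =>
          have h := hxU (n : ℤ)
          push_cast at ih h ⊢
          have e : x - (p:ℝ) * ((n:ℝ) + 1) = x - (p:ℝ) * (n:ℝ) - p := by ring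
          rw [e]
          exact ih.trans h
        | pred n ih =>
          have h := hxU (-(n:ℤ) - 1)
          push_cast at ih h ⊢
          have e : x - (p:ℝ) * (-(n:ℝ) - 1) - p = x - (p:ℝ) * (-(n:ℝ)) := by ring
          rw [e] at h
          exact ih.trans h.symm
      exact key k
    · exact measure_iUnion_null fun m => null_translate hS1null _
  -- assemble
  apply measure_mono_null (t := ⋃ k : ℤ, {x : ℝ | ¬ (x ∈ Ω ↔ x - p * k ∈ Ω)})
  · rintro x (⟨hxΩ, hxU⟩ | ⟨hxU, hxΩ⟩)
    · set k : ℤ := ⌊x / p⌋ with hk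
      refine Set.mem_iUnion.mpr ⟨k, ?_⟩
      simp only [Set.mem_setOf_eq]
      intro hiff
      apply hxU
      refine Set.mem_iUnion.mpr ⟨k, mem_tr.mpr ?_⟩
      rw [hΩ₀]
      refine ⟨hiff.mp hxΩ, ?_, ?_⟩
      · have := Int.sub_floor_div_mul_nonneg x hp0
        rw [hk]; linarith [Int.sub_floor_div_mul_nonneg x hp0]
      · rw [hk]; linarith [Int.sub_floor_div_mul_lt x hp0]
    · simp only [Set.mem_iUnion] at hxU
      obtain ⟨k, hxk⟩ := hxU
      refine Set.mem_iUnion.mpr ⟨k, ?_⟩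
      simp only [Set.mem_setOf_eq]
      intro hiff
      rw [mem_tr, hΩ₀] at hxk
      exact hxΩ (hiff.mpr hxk.1)
  · exact measure_iUnion_null hSk
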